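/- Let I=(0,1) and δ ∈ (0,1) ∪ (1,∞). For any continuously differentiable u : I → ℝ with u(1)=0, lim_{ρ→0⁺} ρ^{1-δ} u(ρ)² = 0, and ∫₀¹ ρ^{2-δ} u'(ρ)² dρ < ∞, one has ∫₀¹ ρ^{-δ} u(ρ)² dρ ≤ (4/|1-δ|²) ∫₀¹ ρ^{2-δ} u'(ρ)² dρ. -/

import Mathlib

/-!
On a compact subinterval `[a, b]` of `(0, 1)`, integrating `(ρ^(1-δ) u²)'` gives
`(1-δ) ∫ ρ^(-δ) u² = [ρ^(1-δ) u²]ₐᵇ - ∫ ρ^(1-δ) 2 u u'`. Young's inequality with weight `|1-δ|/2`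
bounds the cross term by `|1-δ|/2 ∫ ρ^(-δ) u² + 2/|1-δ| ∫ ρ^(2-δ) u'²`, so half of the left side
absorbs it, leaving `∫ₐᵇ ρ^(-δ) u² ≤ 2/|1-δ| (boundary terms) + 4/|1-δ|² ∫ₐᵇ ρ^(2-δ) u'²`.
Letting `a → 0⁺`, `b = 1 - a → 1⁻` kills the boundary terms, and exhausting `(0, 1)` by these
intervals yields both the integrability of `ρ^(-δ) u²` and the inequality.
-/

open Real MeasureTheory Set Filter Topology

lemma abs_two_mul_le_mul_sq_add_inv_mul_sq {c : ℝ} (hc : 0 < c) (s t : ℝ) :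
    |2 * s * t| ≤ c * s ^ 2 + c⁻¹ * t ^ 2 := by
  rw [abs_le]
  constructor <;> nlinarith [sq_nonneg (c * s + t), sq_nonneg (c * s - t), inv_pos.2 hc,
    mul_inv_cancel₀ hc.ne']

lemma abs_rpow_mul_two_mul_le {c x : ℝ} (hc : 0 < c) (hx : 0 < x) (δ s t : ℝ) :
    |x ^ (1 - δ) * (2 * s * t)| ≤ c * (x ^ (-δ) * s ^ 2) + c⁻¹ * (x ^ (2 - δ) * t ^ 2) := by
  have hw : 0 < x ^ (-δ) := rpow_pos_of_pos hx _
  have h1 : x ^ (1 - δ) * (2 * s * t) = x ^ (-δ) * (2 * s * (x * t)) := by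
    rw [sub_eq_neg_add, rpow_add hx, rpow_one]; ring
  have h2 : x ^ (2 - δ) = x ^ (-δ) * x ^ 2 := by
    rw [sub_eq_neg_add, rpow_add hx, rpow_two]
  calc |x ^ (1 - δ) * (2 * s * t)| = x ^ (-δ) * |2 * s * (x * t)| := by
        rw [h1, abs_mul, abs_of_pos hw]
    _ ≤ x ^ (-δ) * (c * s ^ 2 + c⁻¹ * (x * t) ^ 2) :=
        mul_le_mul_of_nonneg_left (abs_two_mul_le_mul_sq_add_inv_mul_sq hc _ _) hw.le
    _ = c * (x ^ (-δ) * s ^ 2) + c⁻¹ * (x ^ (2 - δ) * t ^ 2) := by rw [h2]; ring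

section Interval

variable {δ a b : ℝ} {u u' : ℝ → ℝ}

lemma intervalIntegrable_rpow_mul (ha : 0 < a) (hab : a ≤ b) (p : ℝ) {f : ℝ → ℝ}
    (hf : ContinuousOn f (Icc a b)) : IntervalIntegrable (fun x => x ^ p * f x) volume a b :=
  ((continuousOn_id.rpow_const fun _ hx => Or.inl (ha.trans_le hx.1).ne').mul hf)
    |>.intervalIntegrable_of_Icc hab

variable (ha : 0 < a) (hab : a ≤ b) (hu : ∀ x ∈ Icc a b, HasDerivAt u (u' x) x)
  (hu' : ContinuousOn u' (Icc a b))
include ha hab hu hu'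

lemma intervalIntegral_rpow_mul_sq_by_parts :
    (1 - δ) * (∫ x in a..b, x ^ (-δ) * u x ^ 2) + ∫ x in a..b, x ^ (1 - δ) * (2 * u x * u' x) =
      b ^ (1 - δ) * u b ^ 2 - a ^ (1 - δ) * u a ^ 2 := by
  have hcu : ContinuousOn u (Icc a b) := HasDerivAt.continuousOn hu
  have hI1 := intervalIntegrable_rpow_mul ha hab (-δ) (f := fun x => u x ^ 2) (hcu.pow 2)
  have hI2 := intervalIntegrable_rpow_mul ha hab (1 - δ) (f := fun x => 2 * u x * u' x)
    ((continuousOn_const.mul hcu).mul hu')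
  have hderiv : ∀ x ∈ uIcc a b, HasDerivAt (fun y => y ^ (1 - δ) * u y ^ 2)
      ((1 - δ) * (x ^ (-δ) * u x ^ 2) + x ^ (1 - δ) * (2 * u x * u' x)) x := by
    rw [uIcc_of_le hab]
    intro x hx
    refine ((hasDerivAt_rpow_const (p := 1 - δ) (Or.inl (ha.trans_le hx.1).ne')).mul
      ((hu x hx).pow 2)).congr_deriv ?_
    rw [show 1 - δ - 1 = -δ by ring, Pi.pow_apply]
    push_cast
    ring
  rw [← intervalIntegral.integral_const_mul, ← intervalIntegral.integral_add (hI1.const_mul _) hI2,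
    intervalIntegral.integral_eq_sub_of_hasDerivAt hderiv ((hI1.const_mul _).add hI2)]

lemma abs_intervalIntegral_rpow_mul_two_mul_le {c : ℝ} (hc : 0 < c) :
    |∫ x in a..b, x ^ (1 - δ) * (2 * u x * u' x)| ≤
      c * (∫ x in a..b, x ^ (-δ) * u x ^ 2) + c⁻¹ * ∫ x in a..b, x ^ (2 - δ) * u' x ^ 2 := by
  have hcu : ContinuousOn u (Icc a b) := HasDerivAt.continuousOn hu
  have hI1 := (intervalIntegrable_rpow_mul ha hab (-δ) (f := fun x => u x ^ 2)
    (hcu.pow 2)).const_mul c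
  have hI2 := intervalIntegrable_rpow_mul ha hab (1 - δ) (f := fun x => 2 * u x * u' x)
    ((continuousOn_const.mul hcu).mul hu')
  have hI3 := (intervalIntegrable_rpow_mul ha hab (2 - δ) (f := fun x => u' x ^ 2)
    (hu'.pow 2)).const_mul c⁻¹
  calc _ ≤ ∫ x in a..b, |x ^ (1 - δ) * (2 * u x * u' x)| :=
        intervalIntegral.abs_integral_le_integral_abs hab
    _ ≤ ∫ x in a..b, (c * (x ^ (-δ) * u x ^ 2) + c⁻¹ * (x ^ (2 - δ) * u' x ^ 2)) :=
        intervalIntegral.integral_mono_on hab hI2.abs (hI1.add hI3) fun x hx =>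
          abs_rpow_mul_two_mul_le hc (ha.trans_le hx.1) _ _ _
    _ = _ := by
      rw [intervalIntegral.integral_add hI1 hI3, intervalIntegral.integral_const_mul,
        intervalIntegral.integral_const_mul]

theorem setIntegral_Ioo_rpow_neg_mul_sq_le (hδ : δ ≠ 1) :
    ∫ x in Ioo a b, x ^ (-δ) * u x ^ 2 ≤
      2 / |1 - δ| * (a ^ (1 - δ) * u a ^ 2 + b ^ (1 - δ) * u b ^ 2) +
        4 / |1 - δ| ^ 2 * ∫ x in Ioo a b, x ^ (2 - δ) * u' x ^ 2 := by
  simp only [← integral_Ioc_eq_integral_Ioo, ← intervalIntegral.integral_of_le hab]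
  have hm : 0 < |1 - δ| := abs_pos.2 (sub_ne_zero.2 hδ.symm)
  have hparts := intervalIntegral_rpow_mul_sq_by_parts (δ := δ) ha hab hu hu'
  have hX := abs_intervalIntegral_rpow_mul_two_mul_le (δ := δ) ha hab hu hu' (half_pos hm)
  set m := |1 - δ|
  set J := ∫ x in a..b, x ^ (-δ) * u x ^ 2
  set D := ∫ x in a..b, x ^ (2 - δ) * u' x ^ 2
  set X := ∫ x in a..b, x ^ (1 - δ) * (2 * u x * u' x)
  have hJ : 0 ≤ J := intervalIntegral.integral_nonneg hab fun x hx =>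
    mul_nonneg (rpow_nonneg (ha.le.trans hx.1) _) (sq_nonneg _)
  have hA : 0 ≤ a ^ (1 - δ) * u a ^ 2 := mul_nonneg (rpow_nonneg ha.le _) (sq_nonneg _)
  have hB : 0 ≤ b ^ (1 - δ) * u b ^ 2 :=
    mul_nonneg (rpow_nonneg (ha.le.trans hab) _) (sq_nonneg _)
  have hmJ : m * J ≤ (a ^ (1 - δ) * u a ^ 2 + b ^ (1 - δ) * u b ^ 2) + |X| := by
    have habs : m * J = |(1 - δ) * J| := by rw [abs_mul, abs_of_nonneg hJ]
    rw [habs, eq_sub_of_add_eq hparts]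
    exact abs_le.2 ⟨by linarith [le_abs_self X], by linarith [neg_abs_le X]⟩
  have hJ' : J ≤ (2 * (a ^ (1 - δ) * u a ^ 2 + b ^ (1 - δ) * u b ^ 2) + 4 / m * D) / m := by
    rw [le_div_iff₀ hm]
    rw [inv_div] at hX
    have h4 : 4 / m * D = 2 * (2 / m * D) := by ring
    linarith
  calc J ≤ _ := hJ'
    _ = _ := by field_simp

end Interval

theorem setIntegral_Ioo_rpow_neg_mul_sq_le_of_Icc_subset {δ a b : ℝ} {u u' : ℝ → ℝ}
    (hδ : δ ≠ 1) (hu : ∀ x ∈ Ioo (0:ℝ) 1, HasDerivAt u (u' x) x)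
    (hu' : ContinuousOn u' (Ioo (0:ℝ) 1))
    (hint' : IntegrableOn (fun x => x ^ (2 - δ) * u' x ^ 2) (Ioo 0 1))
    (hsub : Icc a b ⊆ Ioo 0 1) (hab : a ≤ b) :
    ∫ x in Ioo a b, x ^ (-δ) * u x ^ 2 ≤
      2 / |1 - δ| * (a ^ (1 - δ) * u a ^ 2 + b ^ (1 - δ) * u b ^ 2) +
        4 / |1 - δ| ^ 2 * ∫ x in Ioo 0 1, x ^ (2 - δ) * u' x ^ 2 := by
  refine (setIntegral_Ioo_rpow_neg_mul_sq_le (hsub ⟨le_rfl, hab⟩).1 hab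
    (fun x hx => hu x (hsub hx)) (hu'.mono hsub) hδ).trans ?_
  have hmono : ∫ x in Ioo a b, x ^ (2 - δ) * u' x ^ 2 ≤ ∫ x in Ioo 0 1, x ^ (2 - δ) * u' x ^ 2 :=
    setIntegral_mono_set hint'
      ((ae_restrict_mem measurableSet_Ioo).mono fun x hx => by have := hx.1; positivity)
      (Ioo_subset_Icc_self.trans hsub).eventuallyLE
  gcongr

theorem setIntegral_Ioo_le_of_tendsto {ι : Type*} {l : Filter ι} [l.NeBot]
    [l.IsCountablyGenerated] {f : ℝ → ℝ} {A B C : ℝ} {a b c : ι → ℝ}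
    (ha : Tendsto a l (𝓝 A)) (hb : Tendsto b l (𝓝 B)) (hc : Tendsto c l (𝓝 C))
    (hf : ContinuousOn f (Ioo A B)) (hf₀ : ∀ x ∈ Ioo A B, 0 ≤ f x)
    (hsub : ∀ i, Icc (a i) (b i) ⊆ Ioo A B)
    (hbound : ∀ i, ∫ x in Ioo (a i) (b i), f x ≤ c i) :
    ∫ x in Ioo A B, f x ≤ C := by
  have hφ : AECover (volume.restrict (Ioo A B)) l fun i => Ioo (a i) (b i) :=
    aecover_Ioo_of_Ioo ha hb
  have hrestrict : ∀ i, (volume.restrict (Ioo A B)).restrict (Ioo (a i) (b i)) =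
      volume.restrict (Ioo (a i) (b i)) := fun i => by
    rw [Measure.restrict_restrict measurableSet_Ioo,
      inter_eq_left.2 (Ioo_subset_Icc_self.trans (hsub i))]
  have hfi : ∀ i, IntegrableOn f (Ioo (a i) (b i)) (volume.restrict (Ioo A B)) := fun i => by
    rw [IntegrableOn, hrestrict]
    exact ((hf.mono (hsub i)).integrableOn_Icc).mono_set Ioo_subset_Icc_self
  obtain ⟨I, hI⟩ := hc.isBoundedUnder_le
  have hint : IntegrableOn f (Ioo A B) :=
    hφ.integrable_of_integral_bounded_of_nonneg_ae I hfi
      ((ae_restrict_mem measurableSet_Ioo).mono hf₀)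
      ((eventually_map.1 hI).mono fun i hi => by simpa only [hrestrict] using (hbound i).trans hi)
  refine le_of_tendsto_of_tendsto' (hφ.integral_tendsto_of_countably_generated hint) hc
    fun i => ?_
  simpa only [hrestrict] using hbound i

theorem tendsto_rpow_mul_sq_endpoints {ι : Type*} {l : Filter ι} {p : ℝ} {u : ℝ → ℝ}
    {a : ι → ℝ} (hu0 : Tendsto (fun x => x ^ p * u x ^ 2) (𝓝[>] 0) (𝓝 0))
    (hu1 : Tendsto u (𝓝[<] 1) (𝓝 0)) (ha : Tendsto a l (𝓝[>] 0)) :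
    Tendsto (fun i => a i ^ p * u (a i) ^ 2 + (1 - a i) ^ p * u (1 - a i) ^ 2) l (𝓝 0) := by
  have hb : Tendsto (fun i => 1 - a i) l (𝓝[<] 1) :=
    tendsto_nhdsWithin_iff.2 ⟨by
      simpa using tendsto_const_nhds.sub (tendsto_nhds_of_tendsto_nhdsWithin ha),
      (tendsto_nhdsWithin_iff.1 ha).2.mono fun i hi => by simpa using hi⟩
  have hright : Tendsto (fun i => (1 - a i) ^ p * u (1 - a i) ^ 2) l (𝓝 0) := by
    simpa using ((continuousAt_rpow_const 1 p (Or.inl one_ne_zero)).tendsto.comp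
      (tendsto_nhds_of_tendsto_nhdsWithin hb)).mul ((hu1.comp hb).pow 2)
  simpa using (hu0.comp ha).add hright

theorem stmt1_general (δ : ℝ) (hδ : δ ∈ Ioo (0:ℝ) 1 ∪ Ioi (1:ℝ))
    (u u' : ℝ → ℝ)
    (hderiv : ∀ ρ ∈ Ioo (0:ℝ) 1, HasDerivAt u (u' ρ) ρ)
    (hcont : ContinuousOn u' (Ioo (0:ℝ) 1))
    (hu1 : Tendsto u (nhdsWithin 1 (Iio (1:ℝ))) (nhds 0))
    (hu0 : Tendsto (fun ρ : ℝ => ρ ^ (1 - δ) * (u ρ) ^ 2)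
      (nhdsWithin 0 (Ioi (0:ℝ))) (nhds 0))
    (hint' : IntegrableOn (fun ρ : ℝ => ρ ^ (2 - δ) * (u' ρ) ^ 2) (Ioo 0 1))
    :
    ∫ ρ in Ioo (0:ℝ) 1, ρ ^ (-δ) * (u ρ) ^ 2 ≤
      (4 / |1 - δ| ^ 2) * ∫ ρ in Ioo (0:ℝ) 1, ρ ^ (2 - δ) * (u' ρ) ^ 2 := by
  have hδ1 : δ ≠ 1 := by rintro rfl; simp at hδ
  obtain ⟨a, -, ha, ha0⟩ := exists_seq_strictAnti_tendsto' (show (0:ℝ) < 2⁻¹ by norm_num)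
  have hsub : ∀ n, Icc (a n) (1 - a n) ⊆ Ioo 0 1 := fun n x hx =>
    ⟨(ha n).1.trans_le hx.1, hx.2.trans_lt (by linarith [(ha n).1])⟩
  have hb1 : Tendsto (fun n => 1 - a n) atTop (𝓝 1) := by
    simpa using tendsto_const_nhds.sub ha0
  have hends := tendsto_rpow_mul_sq_endpoints hu0 hu1
    (tendsto_nhdsWithin_iff.2 ⟨ha0, .of_forall fun n => (ha n).1⟩)
  have hbound := (hends.const_mul (2 / |1 - δ|)).add_const
    (4 / |1 - δ| ^ 2 * ∫ ρ in Ioo (0:ℝ) 1, ρ ^ (2 - δ) * (u' ρ) ^ 2)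
  rw [mul_zero, zero_add] at hbound
  refine setIntegral_Ioo_le_of_tendsto ha0 hb1 hbound
    ((continuousOn_id.rpow_const fun _ hx => Or.inl hx.1.ne').mul
      ((HasDerivAt.continuousOn hderiv).pow 2))
    (fun x hx => by have := hx.1; positivity) hsub fun n => ?_
  exact setIntegral_Ioo_rpow_neg_mul_sq_le_of_Icc_subset hδ1 hderiv hcont hint' (hsub n)
    (by linarith [(ha n).2])

/-- Weighted Hardy inequality on (0,1): for `δ ∈ (0,1) ∪ (1,∞)`, a C¹ function `u`
on `(0,1)` with `u 1 = 0`, `ρ^(1-δ) u(ρ)² → 0` as `ρ → 0⁺`, and weighted square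
integrability of `u` and `u'`, and any `0 < ε₀ < |1-δ|`,
`∫₀¹ ρ^(-δ) u² ≤ (ε₀(|1-δ|-ε₀))⁻¹ ∫₀¹ ρ^(2-δ) u'²`. -/
theorem stmt1 (δ : ℝ) (hδ : δ ∈ Ioo (0:ℝ) 1 ∪ Ioi (1:ℝ))
    (u u' : ℝ → ℝ)
    (hderiv : ∀ ρ ∈ Ioo (0:ℝ) 1, HasDerivAt u (u' ρ) ρ)
    (hcont : ContinuousOn u' (Ioo (0:ℝ) 1))
    (hu1 : Tendsto u (nhdsWithin 1 (Iio (1:ℝ))) (nhds 0))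
    (hu0 : Tendsto (fun ρ : ℝ => ρ ^ (1 - δ) * (u ρ) ^ 2)
      (nhdsWithin 0 (Ioi (0:ℝ))) (nhds 0))
    (hint : IntegrableOn (fun ρ : ℝ => ρ ^ (2 - δ) * (u ρ) ^ 2) (Ioo 0 1))
    (hint' : IntegrableOn (fun ρ : ℝ => ρ ^ (2 - δ) * (u' ρ) ^ 2) (Ioo 0 1))
    :
    ∫ ρ in Ioo (0:ℝ) 1, ρ ^ (-δ) * (u ρ) ^ 2 ≤
      (4 / |1 - δ| ^ 2) * ∫ ρ in Ioo (0:ℝ) 1, ρ ^ (2 - δ) * (u' ρ) ^ 2 :=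
  stmt1_general δ hδ u u' hderiv hcont hu1 hu0 hint'
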